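/- Let m ≥ 2 and let a be a sequence with a_0 ≠ 0 in ℝ. Computing the coefficients c_0,…,c_N of w^m via Miller's recurrence from c_0,…,c_{k−1} requires for each k a sum of k terms; in particular, the coefficient c_k of w^m given by the iterated Cauchy product formula Σ_{k_{m−1}=0}^{k} Σ_{k_{m−2}=0}^{k_{m−1}} ⋯ Σ_{k_1=0}^{k_2} a_{k_1} a_{k_2−k_1} ⋯ a_{k−k_{m−1}} equals the c_k produced by Miller's recurrence c_k = (1/(k a_0)) Σ_{j=1}^{k} ((m+1)j − k) a_j c_{k−j}, c_0 = a_0^m. -/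

import Mathlib

/-!
With `f = ∑ aₖ Xᵏ`, the coefficients of `f ^ m` are the iterated Cauchy products. Miller's recurrence
is the coefficient of `Xᵏ` in the Euler-operator identity `X (f ^ (m + 1))' = (m + 1) (X f') f ^ m`:
both sides are convolutions of `a` with the coefficients of `f ^ m`, weighted by `k` and by
`(m + 1) j` respectively. Since `a₀ ≠ 0`, the recurrence determines every `c k` from the earlier
ones, so strong induction identifies `c` with the Cauchy products.
-/

open Finset

/-- The iterated Cauchy-product formula for the coefficients of the `m`-th power of
the power series `∑ aₖ xᵏ`: unfolding the recursion gives exactly the nested sums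
`∑_{k_{m-1}=0}^{k} ⋯ ∑_{k_1=0}^{k_2} a_{k_1} a_{k_2-k_1} ⋯ a_{k-k_{m-1}}`. -/
noncomputable def cauchyPow (a : ℕ → ℝ) : ℕ → ℕ → ℝ
  | 0, k => if k = 0 then 1 else 0
  | m + 1, k => ∑ j ∈ Finset.range (k + 1), cauchyPow a m j * a (k - j)

namespace PowerSeries

variable {R : Type*} [CommRing R]

theorem coeff_X_mul_derivative (f : R⟦X⟧) (k : ℕ) :
    coeff k (X * d⁄dX R f) = k * coeff k f := by
  cases k with
  | zero => simp
  | succ n => rw [coeff_succ_X_mul, coeff_derivative]; push_cast; ring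

theorem sum_range_mul_coeff_pow_eq_zero (f : R⟦X⟧) (m k : ℕ) :
    ∑ j ∈ range (k + 1), (((m : R) + 1) * j - k) * coeff j f * coeff (k - j) (f ^ m) = 0 := by
  have euler : X * d⁄dX R (f ^ (m + 1)) = (m + 1) • ((X * d⁄dX R f) * f ^ m) := by
    rw [derivative_pow, nsmul_eq_mul]; push_cast; ring
  have h := congrArg (coeff k) euler
  rw [coeff_X_mul_derivative, pow_succ', map_nsmul, coeff_mul, coeff_mul,
    Nat.sum_antidiagonal_eq_sum_range_succ_mk, Nat.sum_antidiagonal_eq_sum_range_succ_mk] at h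
  simp only [coeff_X_mul_derivative, nsmul_eq_mul, Nat.cast_add_one] at h
  calc ∑ j ∈ range (k + 1), (((m : R) + 1) * j - k) * coeff j f * coeff (k - j) (f ^ m)
      = (m + 1) * ∑ j ∈ range (k + 1), j * coeff j f * coeff (k - j) (f ^ m)
          - k * ∑ j ∈ range (k + 1), coeff j f * coeff (k - j) (f ^ m) := by
        simp only [mul_sum, ← sum_sub_distrib]
        exact sum_congr rfl fun _ _ => by ring
    _ = 0 := by rw [h, sub_self]

theorem natCast_mul_coeff_zero_mul_coeff_pow (f : R⟦X⟧) (m k : ℕ) :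
    k * coeff 0 f * coeff k (f ^ m) =
      ∑ j ∈ Icc 1 k, (((m : R) + 1) * j - k) * coeff j f * coeff (k - j) (f ^ m) := by
  have h := sum_range_mul_coeff_pow_eq_zero f m k
  rw [sum_range_eq_add_Ico _ k.succ_pos] at h
  simp only [Nat.cast_zero, mul_zero, zero_sub, Nat.sub_zero] at h
  rw [← Ico_add_one_right_eq_Icc]
  linear_combination -h

end PowerSeries

open PowerSeries in
theorem cauchyPow_eq_coeff_pow (a : ℕ → ℝ) (m k : ℕ) :
    cauchyPow a m k = coeff k (mk a ^ m) := by
  induction m generalizing k with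
  | zero => simp [cauchyPow, coeff_one]
  | succ m ih =>
    rw [cauchyPow, pow_succ, coeff_mul, Nat.sum_antidiagonal_eq_sum_range_succ_mk]
    simp [ih]

theorem natCast_mul_mul_cauchyPow (a : ℕ → ℝ) (m k : ℕ) :
    k * a 0 * cauchyPow a m k =
      ∑ j ∈ Icc 1 k, (((m : ℝ) + 1) * j - k) * a j * cauchyPow a m (k - j) := by
  simpa [cauchyPow_eq_coeff_pow] using
    PowerSeries.natCast_mul_coeff_zero_mul_coeff_pow (PowerSeries.mk a) m k

theorem cauchy_product_eq_miller_general (m : ℕ) (a : ℕ → ℝ) (ha0 : a 0 ≠ 0)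
    (c : ℕ → ℝ) (hc0 : c 0 = a 0 ^ m)
    (hrec : ∀ k : ℕ, 1 ≤ k →
      c k = (1 / ((k : ℝ) * a 0)) *
        ∑ j ∈ Finset.Icc 1 k, (((m : ℝ) + 1) * j - k) * a j * c (k - j)) :
    ∀ k, cauchyPow a m k = c k := by
  intro k
  induction k using Nat.strong_induction_on with
  | _ k ih =>
    rcases Nat.eq_zero_or_pos k with rfl | hk
    · simp [cauchyPow_eq_coeff_pow, hc0, PowerSeries.coeff_zero_eq_constantCoeff]
    · have hk0 : (k : ℝ) * a 0 ≠ 0 := mul_ne_zero (by positivity) ha0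
      have hsum := sum_congr rfl fun j (hj : j ∈ Icc 1 k) =>
        congrArg ((((m : ℝ) + 1) * j - k) * a j * ·) (ih (k - j) (by grind))
      rw [hrec k hk, ← hsum, ← natCast_mul_mul_cauchyPow, one_div, inv_mul_cancel_left₀ hk0]

theorem cauchy_product_eq_miller (m : ℕ) (hm : 2 ≤ m) (a : ℕ → ℝ) (ha0 : a 0 ≠ 0)
    (c : ℕ → ℝ) (hc0 : c 0 = a 0 ^ m)
    (hrec : ∀ k : ℕ, 1 ≤ k →
      c k = (1 / ((k : ℝ) * a 0)) *
        ∑ j ∈ Finset.Icc 1 k, (((m : ℝ) + 1) * j - k) * a j * c (k - j)) :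
    ∀ k, cauchyPow a m k = c k :=
  cauchy_product_eq_miller_general m a ha0 c hc0 hrec
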